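/- The point reflection s(x) = 2c − x through c maps the vertex set {v0, v1, v2, v3} of the tetrahedron T onto the image of that vertex set under the coordinate transposition τ(x1,x2,x3) = (x1,x3,x2); explicitly, s(v0) = τ(v2), s(v1) = τ(v3), s(v2) = τ(v0), s(v3) = τ(v1). -/

import Mathlib

noncomputable section

def v0 : Fin 3 → ℝ := ![1, 0, 1]
def v1 : Fin 3 → ℝ := ![1, 0, 2 * Real.sqrt 2 - 1]
def v2 : Fin 3 → ℝ := ![Real.sqrt 2 - 1, Real.sqrt 2 - 1, Real.sqrt 2]
def v3 : Fin 3 → ℝ := ![Real.sqrt 2 - 1, 1 - Real.sqrt 2, Real.sqrt 2]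

def c : Fin 3 → ℝ := (1 / Real.sqrt 2) • ![1, 1, 1]

/-- The point reflection through `c`. -/
def s (x : Fin 3 → ℝ) : Fin 3 → ℝ := (2 : ℝ) • c - x

/-- The coordinate transposition `τ(x1,x2,x3) = (x1,x3,x2)`. -/
def τ (x : Fin 3 → ℝ) : Fin 3 → ℝ := ![x 0, x 2, x 1]

lemma two_smul_c : (2 : ℝ) • c = fun _ => Real.sqrt 2 := by
  ext i
  fin_cases i <;> simp [c, ← div_eq_mul_inv, Real.div_sqrt]

lemma s_apply (x : Fin 3 → ℝ) (i : Fin 3) : s x i = Real.sqrt 2 - x i := by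
  simp [s, two_smul_c]

/-- The point reflection through `c` maps the vertex set of `T` onto the image of
that vertex set under the coordinate transposition `τ`: explicitly
`s(v0)=τ(v2)`, `s(v1)=τ(v3)`, `s(v2)=τ(v0)`, `s(v3)=τ(v1)`. -/
theorem point_reflection_vs_transposition :
    s v0 = τ v2 ∧ s v1 = τ v3 ∧ s v2 = τ v0 ∧ s v3 = τ v1 := by
  refine ⟨?_, ?_, ?_, ?_⟩ <;> ext i <;> fin_cases i <;>
    simp only [s_apply, τ, v0, v1, v2, v3, Fin.zero_eta, Fin.mk_one, Fin.reduceFinMk,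
      Matrix.cons_val] <;> ring

end
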